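/- arXiv:math/0505123 — 4 statements merged into one kernel-verified Lean document; each statement's English description precedes it below -/
import Mathlib

section
/- Let b ∈ ℝ³ and let X : ℝ → ℝ³ be a smooth nonvanishing solution of X'' + X = (|X|²b - (X·b)X)/|X|³. Then the 'angular momentum' J(s) = b · (X(s) × X'(s)) is constant in s. -/
open Real

/-- The cross product on `ℝ³` with the Euclidean structure. -/
def cross3 (v w : EuclideanSpace ℝ (Fin 3)) : EuclideanSpace ℝ (Fin 3) :=
  (WithLp.toLp 2 ![v 1 * w 2 - v 2 * w 1, v 2 * w 0 - v 0 * w 2, v 0 * w 1 - v 1 * w 0] :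
    EuclideanSpace ℝ (Fin 3))

/-- The 'angular momentum' `J = b · (X × X')` is a first integral of the
Euler–Lagrange equation `X'' + X = (|X|²b - (X·b)X)/|X|³`. -/
theorem angular_momentum_first_integral
    (b : EuclideanSpace ℝ (Fin 3)) (X : ℝ → EuclideanSpace ℝ (Fin 3))
    (hX : ContDiff ℝ (⊤ : ℕ∞) X) (hne : ∀ s, X s ≠ 0)
    (hEL : ∀ s, deriv (deriv X) s + X s =
      (‖X s‖ ^ 3)⁻¹ • (‖X s‖ ^ 2 • b - (inner ℝ (X s) b : ℝ) • X s))
    (J : ℝ → ℝ)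
    (hJ : J = fun s => (inner ℝ b (cross3 (X s) (deriv X s)) : ℝ)) :
    ∀ s t : ℝ, J s = J t := by
  have hX' : ContDiff ℝ ((⊤:ℕ∞):WithTop ℕ∞) X := hX.of_le (by simp)
  have hdX : Differentiable ℝ X := hX'.differentiable (by simp)
  have hdv : Differentiable ℝ (deriv X) :=
    ((contDiff_infty_iff_deriv.mp hX').2).differentiable (by simp)
  have hx : ∀ (i : Fin 3) (s : ℝ), HasDerivAt (fun t => X t i) (deriv X s i) s := by
    intro i s
    exact (EuclideanSpace.proj i).hasFDerivAt.comp_hasDerivAt s (hdX s).hasDerivAt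
  have hv : ∀ (i : Fin 3) (s : ℝ),
      HasDerivAt (fun t => deriv X t i) (deriv (deriv X) s i) s := by
    intro i s
    exact (EuclideanSpace.proj i).hasFDerivAt.comp_hasDerivAt s (hdv s).hasDerivAt
  have hJ' : J = fun s =>
      b 0 * (X s 1 * deriv X s 2 - X s 2 * deriv X s 1)
      + b 1 * (X s 2 * deriv X s 0 - X s 0 * deriv X s 2)
      + b 2 * (X s 0 * deriv X s 1 - X s 1 * deriv X s 0) := by
    funext s
    simp [hJ, cross3, PiLp.inner_apply, Fin.sum_univ_three, RCLike.inner_apply]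
    ring
  have key : ∀ s, HasDerivAt J 0 s := by
    intro s
    have ha : ∀ i : Fin 3, deriv (deriv X) s i =
        (‖X s‖ ^ 3)⁻¹ * (‖X s‖ ^ 2 * b i - (inner ℝ (X s) b : ℝ) * X s i) - X s i := by
      intro i
      have h := congrArg (fun w : EuclideanSpace ℝ (Fin 3) => w i) (hEL s)
      simp only [PiLp.add_apply, PiLp.smul_apply, PiLp.sub_apply, smul_eq_mul] at h
      linarith
    have H : HasDerivAt (fun t =>
        b 0 * (X t 1 * deriv X t 2 - X t 2 * deriv X t 1)
        + b 1 * (X t 2 * deriv X t 0 - X t 0 * deriv X t 2)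
        + b 2 * (X t 0 * deriv X t 1 - X t 1 * deriv X t 0))
        (b 0 * ((deriv X s 1 * deriv X s 2 + X s 1 * deriv (deriv X) s 2)
            - (deriv X s 2 * deriv X s 1 + X s 2 * deriv (deriv X) s 1))
        + b 1 * ((deriv X s 2 * deriv X s 0 + X s 2 * deriv (deriv X) s 0)
            - (deriv X s 0 * deriv X s 2 + X s 0 * deriv (deriv X) s 2))
        + b 2 * ((deriv X s 0 * deriv X s 1 + X s 0 * deriv (deriv X) s 1)
            - (deriv X s 1 * deriv X s 0 + X s 1 * deriv (deriv X) s 0))) s := by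
      exact (((((hx 1 s).mul (hv 2 s)).sub ((hx 2 s).mul (hv 1 s))).const_mul (b 0)).add
        ((((hx 2 s).mul (hv 0 s)).sub ((hx 0 s).mul (hv 2 s))).const_mul (b 1))).add
        ((((hx 0 s).mul (hv 1 s)).sub ((hx 1 s).mul (hv 0 s))).const_mul (b 2))
    rw [hJ']
    convert H using 1
    simp only [ha]
    ring
  intro s t
  exact is_const_of_deriv_eq_zero (fun u => (key u).differentiableAt)
    (fun u => (key u).deriv) s t
end

section
/- Let α > β > 0, |X₀(s)| = √(α²cos²s + β²sin²s), and K(s) = (1/4)|sin s| the 2π-periodic kernel. Define A₁₁(s) = β²sin²s/|X₀(s)|³, A₁₂(s) = -αβ cos s sin s/|X₀(s)|³, A₂₂(s) = α²cos²s/|X₀(s)|³, and I₁ = ⟨A₁₁, K*A₁₁⟩ + ⟨A₁₂, K*A₁₂⟩, I₂ = ⟨A₂₂, K*A₂₂⟩ + ⟨A₁₂, K*A₁₂⟩, where ⟨f,g⟩ = ∫₀^{2π} f g ds and (K*f)(s) = ∫₀^{2π} K(s-t)f(t)dt. Then α² I₁ = β² I₂. -/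
/-!
Write `B(f, g) = ⟨f, K * g⟩`, `ℓ = |X₀|`, `u = ℓ⁻¹`, `v = ℓ⁻³`. Using `ℓ² = α² cos² + β² sin²`,
`A₁₁ = β² (α² v - u) / (α² - β²)`, `A₂₂ = α² (u - β² v) / (α² - β²)` and
`A₁₂ = -αβ u' / (α² - β²)`, so that
`α² I₁ - β² I₂ = α²β² / (α² - β²) · (α²β² B(v, v) - B(u, u) + B(u', u'))`.

The kernel inverts `1 + d²/ds²`: since `|sin|'' + |sin| = 2 ∑ δ_{kπ}`, every `2π`-periodic `F`
satisfies `K * (F'' + F) = (F + F(· - π)) / 2`, which is `F` when `F` is `π`-periodic.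
As `ℓ'' + ℓ = α²β² ℓ⁻³`, this gives `K * v = ℓ / (α²β²)`, hence `α²β² B(v, v) = ∫ u²`.
Integrating by parts, `B(u', u') = -B(u, u'')`, so `B(u, u) - B(u', u') = B(u, u'' + u) = ∫ u²`.
-/

open Real intervalIntegral Function Set

theorem Function.Periodic.deriv {𝕜 F : Type*} [NontriviallyNormedField 𝕜] [NormedAddCommGroup F]
    [NormedSpace 𝕜 F] {f : 𝕜 → F} {T : 𝕜} (hf : Periodic f T) : Periodic (deriv f) T := fun x => by
  rw [← deriv_comp_add_const, show (fun x => f (x + T)) = f from funext hf]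

theorem integral_deriv_mul_eq_neg_of_periodic {f g : ℝ → ℝ} {T : ℝ} (hfT : Periodic f T)
    (hgT : Periodic g T) (hf : ContDiff ℝ 1 f) (hg : ContDiff ℝ 1 g) :
    ∫ x in (0:ℝ)..T, deriv f x * g x = -∫ x in (0:ℝ)..T, f x * deriv g x := by
  have hfi := (hf.continuous_deriv le_rfl).intervalIntegrable (μ := MeasureTheory.volume) 0 T
  have hgi := (hg.continuous_deriv le_rfl).intervalIntegrable (μ := MeasureTheory.volume) 0 T
  have h := integral_deriv_mul_eq_sub (fun x _ => (hf.differentiable one_ne_zero x).hasDerivAt)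
    (fun x _ => (hg.differentiable one_ne_zero x).hasDerivAt) hfi hgi
  have hT : f T * g T = f 0 * g 0 := by rw [← zero_add T, hfT, hgT]
  rw [integral_add (hfi.mul_continuousOn hg.continuous.continuousOn)
    (hgi.continuousOn_mul hf.continuous.continuousOn), hT, sub_self] at h
  linarith

noncomputable def absSinConv (f : ℝ → ℝ) (s : ℝ) : ℝ :=
  ∫ t in (0:ℝ)..(2 * π), (1/4) * |sin (s - t)| * f t

noncomputable def absSinPairing (f g : ℝ → ℝ) : ℝ :=
  ∫ s in (0:ℝ)..(2 * π), f s * absSinConv g s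

section absSinConv

variable {f g h : ℝ → ℝ}

theorem absSinConv_eq_integral_sub (hg : Periodic g (2 * π)) (s : ℝ) :
    absSinConv g s = ∫ τ in (0:ℝ)..(2 * π), (1/4) * |sin τ| * g (s - τ) := by
  set k : ℝ → ℝ := fun t => (1/4) * |sin (s - t)| * g t
  have hk : Periodic k (2 * π) := fun t => by
    simp only [k, hg t, show s - (t + 2 * π) = s - t - 2 * π by ring, sin_sub_two_pi]
  calc absSinConv g s = ∫ t in (s - 2 * π)..(s - 2 * π) + 2 * π, k t := by
        rw [hk.intervalIntegral_add_eq (s - 2 * π) 0, zero_add]; rfl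
    _ = ∫ τ in (0:ℝ)..(2 * π), k (s - τ) := by
        rw [integral_comp_sub_left, sub_zero, sub_add_cancel]
    _ = _ := by simp only [k, sub_sub_cancel]

theorem continuous_absSinConv (hf : Continuous f) : Continuous (absSinConv f) :=
  continuous_parametric_intervalIntegral_of_continuous' (by fun_prop) _ _

theorem absSinConv_add (hf : Continuous f) (hg : Continuous g) :
    absSinConv (f + g) = absSinConv f + absSinConv g := funext fun s => by
  simp only [absSinConv, Pi.add_apply, mul_add]
  exact integral_add (Continuous.intervalIntegrable (by fun_prop) _ _)
    (Continuous.intervalIntegrable (by fun_prop) _ _)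

theorem absSinConv_smul (c : ℝ) (f : ℝ → ℝ) : absSinConv (c • f) = c • absSinConv f :=
  funext fun s => by
    simp only [absSinConv, Pi.smul_apply, smul_eq_mul, ← integral_const_mul]
    congr 1 with t; ring

theorem absSinPairing_add_left (hf : Continuous f) (hg : Continuous g) (hh : Continuous h) :
    absSinPairing (f + g) h = absSinPairing f h + absSinPairing g h := by
  have hK := continuous_absSinConv hh
  simp only [absSinPairing, Pi.add_apply, add_mul]
  exact integral_add (Continuous.intervalIntegrable (by fun_prop) _ _)
    (Continuous.intervalIntegrable (by fun_prop) _ _)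

theorem absSinPairing_add_right (hf : Continuous f) (hg : Continuous g) (hh : Continuous h) :
    absSinPairing f (g + h) = absSinPairing f g + absSinPairing f h := by
  have hKg := continuous_absSinConv hg
  have hKh := continuous_absSinConv hh
  simp only [absSinPairing, absSinConv_add hg hh, Pi.add_apply, mul_add]
  exact integral_add (Continuous.intervalIntegrable (by fun_prop) _ _)
    (Continuous.intervalIntegrable (by fun_prop) _ _)

theorem absSinPairing_smul_left (c : ℝ) (f g : ℝ → ℝ) :
    absSinPairing (c • f) g = c * absSinPairing f g := by
  simp only [absSinPairing, Pi.smul_apply, smul_eq_mul, mul_assoc, integral_const_mul]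

theorem absSinPairing_smul_right (c : ℝ) (f g : ℝ → ℝ) :
    absSinPairing f (c • g) = c * absSinPairing f g := by
  simp only [absSinPairing, absSinConv_smul, Pi.smul_apply, smul_eq_mul, mul_left_comm _ c,
    integral_const_mul]

theorem absSinPairing_smul_add_smul (hf : Continuous f) (hg : Continuous g) (a b : ℝ) :
    absSinPairing (a • f + b • g) (a • f + b • g) = a ^ 2 * absSinPairing f f +
      a * b * (absSinPairing f g + absSinPairing g f) + b ^ 2 * absSinPairing g g := by
  have haf := hf.const_smul a
  have hbg := hg.const_smul b
  rw [absSinPairing_add_left haf hbg (haf.add hbg), absSinPairing_add_right haf haf hbg,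
    absSinPairing_add_right hbg haf hbg]
  simp only [absSinPairing_smul_left, absSinPairing_smul_right]
  ring

theorem absSinPairing_eq_integral_correlation (hf : Continuous f) (hg : Continuous g)
    (hgp : Periodic g (2 * π)) :
    absSinPairing f g =
      ∫ τ in (0:ℝ)..(2 * π), (1/4) * |sin τ| * ∫ s in (0:ℝ)..(2 * π), f s * g (s - τ) := by
  have hint : MeasureTheory.IntegrableOn (uncurry fun s τ => f s * ((1/4) * |sin τ| * g (s - τ)))
      (uIoc 0 (2 * π) ×ˢ uIoc 0 (2 * π)) :=
    ((Continuous.continuousOn (by fun_prop)).integrableOn_compact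
      (isCompact_uIcc.prod isCompact_uIcc)).mono_set (prod_mono uIoc_subset_uIcc uIoc_subset_uIcc)
  simp only [absSinPairing, absSinConv_eq_integral_sub hgp, ← integral_const_mul]
  rw [MeasureTheory.intervalIntegral_intervalIntegral_swap hint]
  congr 1 with τ
  congr 1 with s
  ring

theorem absSinPairing_deriv_left (hf : ContDiff ℝ 1 f) (hg : ContDiff ℝ 1 g)
    (hfp : Periodic f (2 * π)) (hgp : Periodic g (2 * π)) :
    absSinPairing (deriv f) g = -absSinPairing f (deriv g) := by
  have hf' := hf.continuous_deriv le_rfl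
  have hg' := hg.continuous_deriv le_rfl
  rw [absSinPairing_eq_integral_correlation hf' hg.continuous hgp,
    absSinPairing_eq_integral_correlation hf.continuous hg' hgp.deriv, ← integral_neg]
  congr 1 with τ
  have hshift : deriv (fun s => g (s - τ)) = fun s => deriv g (s - τ) :=
    funext fun s => deriv_comp_sub_const g τ s
  have := integral_deriv_mul_eq_neg_of_periodic hfp (hgp.sub_const τ) hf
    (hg.comp (contDiff_id.sub contDiff_const))
  rw [hshift] at this
  rw [this]
  ring

end absSinConv

theorem integral_sin_mul_deriv_deriv_add_comp_sub {F : ℝ → ℝ} (hF : ContDiff ℝ 2 F)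
    (s a b : ℝ) :
    ∫ τ in a..b, sin τ * (deriv (deriv F) + F) (s - τ) =
      (sin a * deriv F (s - a) + cos a * F (s - a)) -
        (sin b * deriv F (s - b) + cos b * F (s - b)) := by
  obtain ⟨hF₁, -, hF'⟩ := contDiff_succ_iff_deriv.1 (show ContDiff ℝ (1 + 1) F from hF)
  have hF'' := hF'.continuous_deriv le_rfl
  have hH : ∀ τ, HasDerivAt (fun τ => -sin τ * deriv F (s - τ) - cos τ * F (s - τ))
      (sin τ * (deriv (deriv F) + F) (s - τ)) τ := fun τ => by
    have h1 := (hF'.differentiable one_ne_zero (s - τ)).hasDerivAt.comp_const_sub s τ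
    have h2 := (hF₁ (s - τ)).hasDerivAt.comp_const_sub s τ
    refine (((hasDerivAt_sin τ).neg.mul h1).sub ((hasDerivAt_cos τ).mul h2)).congr_deriv ?_
    simp only [Pi.add_apply, Pi.neg_apply]
    ring
  rw [integral_eq_sub_of_hasDerivAt (fun τ _ => hH τ)
    (Continuous.intervalIntegrable (by fun_prop) a b)]
  ring

theorem absSinConv_deriv_deriv_add {F : ℝ → ℝ} (hF : ContDiff ℝ 2 F) (hFp : Periodic F (2 * π))
    (s : ℝ) : absSinConv (deriv (deriv F) + F) s = (F s + F (s - π)) / 2 := by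
  set G := deriv (deriv F) + F
  have hG : Continuous G :=
    ((contDiff_succ_iff_deriv.1 (show ContDiff ℝ (1 + 1) F from hF)).2.2.continuous_deriv
      le_rfl).add hF.continuous
  have hint : ∀ a b : ℝ, IntervalIntegrable (fun τ => (1/4) * |sin τ| * G (s - τ))
      MeasureTheory.volume a b :=
    fun a b => Continuous.intervalIntegrable (by fun_prop) a b
  have h₁ : ∫ τ in (0:ℝ)..π, (1/4) * |sin τ| * G (s - τ) =
      (1/4) * ∫ τ in (0:ℝ)..π, sin τ * G (s - τ) := by
    rw [← integral_const_mul]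
    refine integral_congr fun τ hτ => ?_
    rw [uIcc_of_le pi_nonneg] at hτ
    simp only [abs_of_nonneg (sin_nonneg_of_nonneg_of_le_pi hτ.1 hτ.2), mul_assoc]
  have h₂ : ∫ τ in π..(2 * π), (1/4) * |sin τ| * G (s - τ) =
      -(1/4) * ∫ τ in π..(2 * π), sin τ * G (s - τ) := by
    rw [← integral_const_mul]
    refine integral_congr fun τ hτ => ?_
    rw [uIcc_of_le (by linarith [pi_pos])] at hτ
    have : sin τ ≤ 0 := sin_sub_two_pi τ ▸
      sin_nonpos_of_nonpos_of_neg_pi_le (by linarith [hτ.2]) (by linarith [hτ.1])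
    simp only [abs_of_nonpos this]
    ring
  rw [absSinConv_eq_integral_sub (hFp.deriv.deriv.add hFp),
    ← integral_add_adjacent_intervals (hint 0 π) (hint π (2 * π)), h₁, h₂,
    integral_sin_mul_deriv_deriv_add_comp_sub hF, integral_sin_mul_deriv_deriv_add_comp_sub hF]
  simp only [sin_zero, cos_zero, sin_pi, cos_pi, sin_two_pi, cos_two_pi, sub_zero, hFp.sub_eq s]
  ring

noncomputable def ellipseNorm (α β s : ℝ) : ℝ := √(α ^ 2 * cos s ^ 2 + β ^ 2 * sin s ^ 2)

section ellipseNorm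

variable {α β : ℝ}

theorem ellipseNorm_sq (s : ℝ) :
    ellipseNorm α β s ^ 2 = α ^ 2 * cos s ^ 2 + β ^ 2 * sin s ^ 2 :=
  sq_sqrt (by positivity)

theorem ellipseNorm_periodic : Periodic (ellipseNorm α β) π := fun s => by
  simp only [ellipseNorm, cos_add_pi, sin_add_pi, neg_sq]

variable (hα : α ≠ 0) (hβ : β ≠ 0)
include hα hβ

theorem ellipseNorm_pos (s : ℝ) : 0 < ellipseNorm α β s := by
  refine sqrt_pos.2 ?_
  rcases eq_or_ne (cos s) 0 with hc | hc
  · have : sin s ^ 2 = 1 := by nlinarith [sin_sq_add_cos_sq s]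
    rw [hc, this]
    positivity
  · positivity

theorem contDiff_ellipseNorm {n : WithTop ℕ∞} : ContDiff ℝ n (ellipseNorm α β) :=
  ContDiff.sqrt (by fun_prop) fun s => (sqrt_pos.1 (ellipseNorm_pos hα hβ s)).ne'

theorem hasDerivAt_ellipseNorm (s : ℝ) :
    HasDerivAt (ellipseNorm α β) ((β ^ 2 - α ^ 2) * sin s * cos s / ellipseNorm α β s) s := by
  have hq : HasDerivAt (fun s => α ^ 2 * cos s ^ 2 + β ^ 2 * sin s ^ 2)
      (2 * ((β ^ 2 - α ^ 2) * sin s * cos s)) s := by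
    refine ((((hasDerivAt_cos s).pow 2).const_mul (α ^ 2)).add
      (((hasDerivAt_sin s).pow 2).const_mul (β ^ 2))).congr_deriv ?_
    simp only [Nat.cast_ofNat]
    ring
  refine (hq.sqrt (sqrt_pos.1 (ellipseNorm_pos hα hβ s)).ne').congr_deriv ?_
  exact mul_div_mul_left _ _ two_ne_zero

theorem deriv_ellipseNorm :
    deriv (ellipseNorm α β) = fun s => (β ^ 2 - α ^ 2) * sin s * cos s / ellipseNorm α β s :=
  funext fun s => (hasDerivAt_ellipseNorm hα hβ s).deriv

theorem deriv_deriv_ellipseNorm_add :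
    deriv (deriv (ellipseNorm α β)) + ellipseNorm α β =
      (α ^ 2 * β ^ 2) • fun s => (ellipseNorm α β s ^ 3)⁻¹ := by
  funext s
  have hℓ := (ellipseNorm_pos hα hβ s).ne'
  have hnum : HasDerivAt (fun s => (β ^ 2 - α ^ 2) * sin s * cos s)
      ((β ^ 2 - α ^ 2) * (cos s ^ 2 - sin s ^ 2)) s := by
    refine (((hasDerivAt_sin s).const_mul (β ^ 2 - α ^ 2)).mul (hasDerivAt_cos s)).congr_deriv ?_
    ring
  rw [deriv_ellipseNorm hα hβ, Pi.add_apply, Pi.smul_apply, smul_eq_mul,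
    (hnum.fun_div (hasDerivAt_ellipseNorm hα hβ s) hℓ).deriv]
  field_simp
  linear_combination (ellipseNorm α β s ^ 2 + α ^ 2 * cos s ^ 2 + β ^ 2 * sin s ^ 2
      + (β ^ 2 - α ^ 2) * (cos s ^ 2 - sin s ^ 2)) * ellipseNorm_sq (α := α) (β := β) s
    + α ^ 2 * β ^ 2 * (sin s ^ 2 + cos s ^ 2 + 1) * sin_sq_add_cos_sq s

theorem absSinConv_inv_ellipseNorm_pow_three (s : ℝ) :
    absSinConv (fun s => (ellipseNorm α β s ^ 3)⁻¹) s = ellipseNorm α β s / (α ^ 2 * β ^ 2) := by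
  have h := absSinConv_deriv_deriv_add (contDiff_ellipseNorm hα hβ)
    (by simpa using ellipseNorm_periodic.nat_mul 2) s
  rw [deriv_deriv_ellipseNorm_add hα hβ, absSinConv_smul, ellipseNorm_periodic.sub_eq] at h
  rw [eq_div_iff (by positivity), mul_comm]
  simpa using h

theorem contDiff_inv_ellipseNorm {n : WithTop ℕ∞} :
    ContDiff ℝ n fun s => (ellipseNorm α β s)⁻¹ :=
  (contDiff_ellipseNorm hα hβ).inv fun s => (ellipseNorm_pos hα hβ s).ne'

theorem deriv_inv_ellipseNorm :
    deriv (fun s => (ellipseNorm α β s)⁻¹) =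
      fun s => (α ^ 2 - β ^ 2) * sin s * cos s / ellipseNorm α β s ^ 3 := funext fun s => by
  have hℓ := (ellipseNorm_pos hα hβ s).ne'
  rw [((hasDerivAt_ellipseNorm hα hβ s).fun_inv hℓ).deriv]
  field_simp
  ring

theorem absSinPairing_inv_ellipseNorm_pow_three :
    absSinPairing (fun s => (ellipseNorm α β s ^ 3)⁻¹) (fun s => (ellipseNorm α β s ^ 3)⁻¹) =
      (∫ s in (0:ℝ)..(2 * π), (ellipseNorm α β s ^ 2)⁻¹) / (α ^ 2 * β ^ 2) := by
  rw [absSinPairing, ← integral_div]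
  refine integral_congr fun s _ => ?_
  have hℓ := (ellipseNorm_pos hα hβ s).ne'
  simp only [absSinConv_inv_ellipseNorm_pow_three hα hβ s]
  field_simp

theorem absSinPairing_inv_ellipseNorm_sub :
    absSinPairing (fun s => (ellipseNorm α β s)⁻¹) (fun s => (ellipseNorm α β s)⁻¹) -
        absSinPairing (fun s => (α ^ 2 - β ^ 2) * sin s * cos s / ellipseNorm α β s ^ 3)
          (fun s => (α ^ 2 - β ^ 2) * sin s * cos s / ellipseNorm α β s ^ 3) =
      ∫ s in (0:ℝ)..(2 * π), (ellipseNorm α β s ^ 2)⁻¹ := by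
  set u : ℝ → ℝ := fun s => (ellipseNorm α β s)⁻¹
  have huπ : Periodic u π := fun s => by simp only [u, ellipseNorm_periodic s]
  have hup : Periodic u (2 * π) := by simpa using huπ.nat_mul 2
  have hu : ContDiff ℝ 3 u := contDiff_inv_ellipseNorm hα hβ
  have hu' : ContDiff ℝ 2 (deriv u) := hu.deriv'
  rw [← deriv_inv_ellipseNorm hα hβ,
    absSinPairing_deriv_left (hu.of_le (by norm_num)) (hu'.of_le (by norm_num)) hup hup.deriv,
    sub_neg_eq_add, ← absSinPairing_add_right hu.continuous hu.continuous
      (hu'.continuous_deriv (by norm_num)), add_comm, absSinPairing]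
  refine integral_congr fun s _ => ?_
  simp only [absSinConv_deriv_deriv_add (hu.of_le (by norm_num)) hup, huπ.sub_eq, u]
  ring

theorem sin_sq_div_ellipseNorm_pow_three (hd : α ^ 2 - β ^ 2 ≠ 0) (s : ℝ) :
    β ^ 2 * sin s ^ 2 / ellipseNorm α β s ^ 3 = α ^ 2 * β ^ 2 / (α ^ 2 - β ^ 2) *
      (ellipseNorm α β s ^ 3)⁻¹ + -β ^ 2 / (α ^ 2 - β ^ 2) * (ellipseNorm α β s)⁻¹ := by
  have hℓ := (ellipseNorm_pos hα hβ s).ne'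
  field_simp
  linear_combination ellipseNorm_sq (α := α) (β := β) s + α ^ 2 * sin_sq_add_cos_sq s

theorem cos_sq_div_ellipseNorm_pow_three (hd : α ^ 2 - β ^ 2 ≠ 0) (s : ℝ) :
    α ^ 2 * cos s ^ 2 / ellipseNorm α β s ^ 3 = -(α ^ 2 * β ^ 2) / (α ^ 2 - β ^ 2) *
      (ellipseNorm α β s ^ 3)⁻¹ + α ^ 2 / (α ^ 2 - β ^ 2) * (ellipseNorm α β s)⁻¹ := by
  have hℓ := (ellipseNorm_pos hα hβ s).ne'
  field_simp
  linear_combination -ellipseNorm_sq (α := α) (β := β) s - β ^ 2 * sin_sq_add_cos_sq s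

end ellipseNorm

/-- The elliptic-integral identity `α² I₁ = β² I₂` for the convolution integrals
built from the constraint matrix entries of an elliptical orbit. -/
theorem elliptic_integral_identity
    (α β : ℝ) (hβ : 0 < β) (hαβ : β < α)
    (Φ A11 A12 A22 : ℝ → ℝ) (I1 I2 : ℝ)
    (hΦ : Φ = fun s => Real.sqrt (α ^ 2 * cos s ^ 2 + β ^ 2 * sin s ^ 2))
    (hA11 : A11 = fun s => β ^ 2 * sin s ^ 2 / (Φ s) ^ 3)
    (hA12 : A12 = fun s => -(α * β * cos s * sin s) / (Φ s) ^ 3)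
    (hA22 : A22 = fun s => α ^ 2 * cos s ^ 2 / (Φ s) ^ 3)
    (hI1 : I1 =
      (∫ s in (0:ℝ)..(2 * π), A11 s * ∫ t in (0:ℝ)..(2 * π), (1/4) * |sin (s - t)| * A11 t)
      + ∫ s in (0:ℝ)..(2 * π), A12 s * ∫ t in (0:ℝ)..(2 * π), (1/4) * |sin (s - t)| * A12 t)
    (hI2 : I2 =
      (∫ s in (0:ℝ)..(2 * π), A22 s * ∫ t in (0:ℝ)..(2 * π), (1/4) * |sin (s - t)| * A22 t)
      + ∫ s in (0:ℝ)..(2 * π), A12 s * ∫ t in (0:ℝ)..(2 * π), (1/4) * |sin (s - t)| * A12 t) :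
    α ^ 2 * I1 = β ^ 2 * I2 := by
  have hα : α ≠ 0 := (hβ.trans hαβ).ne'
  have hd : α ^ 2 - β ^ 2 ≠ 0 := (sub_pos.2 (pow_lt_pow_left₀ hαβ hβ.le two_ne_zero)).ne'
  have hΦ' : Φ = ellipseNorm α β := hΦ
  set u : ℝ → ℝ := fun s => (ellipseNorm α β s)⁻¹
  set v : ℝ → ℝ := fun s => (ellipseNorm α β s ^ 3)⁻¹
  set p : ℝ → ℝ := fun s => (α ^ 2 - β ^ 2) * sin s * cos s / ellipseNorm α β s ^ 3
  have hu : Continuous u := (contDiff_inv_ellipseNorm hα hβ.ne' (n := 0)).continuous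
  have hv : Continuous v := ((contDiff_ellipseNorm hα hβ.ne' (n := 0)).continuous.pow 3).inv₀
    fun s => pow_ne_zero 3 (ellipseNorm_pos hα hβ.ne' s).ne'
  have hA11' : A11 = (α ^ 2 * β ^ 2 / (α ^ 2 - β ^ 2)) • v + (-β ^ 2 / (α ^ 2 - β ^ 2)) • u :=
    funext fun s => by rw [hA11, hΦ']; exact sin_sq_div_ellipseNorm_pow_three hα hβ.ne' hd s
  have hA22' : A22 = (-(α ^ 2 * β ^ 2) / (α ^ 2 - β ^ 2)) • v + (α ^ 2 / (α ^ 2 - β ^ 2)) • u :=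
    funext fun s => by rw [hA22, hΦ']; exact cos_sq_div_ellipseNorm_pow_three hα hβ.ne' hd s
  have hA12' : A12 = (-(α * β) / (α ^ 2 - β ^ 2)) • p := funext fun s => by
    have := (ellipseNorm_pos hα hβ.ne' s).ne'
    simp only [hA12, hΦ', Pi.smul_apply, smul_eq_mul, p]
    field_simp
  have hI1' : I1 = absSinPairing A11 A11 + absSinPairing A12 A12 := hI1
  have hI2' : I2 = absSinPairing A22 A22 + absSinPairing A12 A12 := hI2
  rw [hI1', hI2', hA11', hA22', hA12', absSinPairing_smul_add_smul hv hu,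
    absSinPairing_smul_add_smul hv hu, absSinPairing_smul_left, absSinPairing_smul_right,
    absSinPairing_inv_ellipseNorm_pow_three hα hβ.ne',
    eq_add_of_sub_eq (absSinPairing_inv_ellipseNorm_sub hα hβ.ne')]
  field_simp
  ring
end

section
/- Let α > β > 0 and Φ(s) = √(α²cos²s + β²sin²s). Then ∫₀^{2π} (1/4)|sin(s-t)| · (α²β²/Φ(t)³) dt = Φ(s) for all s. -/
open Real MeasureTheory intervalIntegral Function

/-!
`Φ` is the support function of the ellipse with semi-axes `α`, `β`, and `α²β²/Φ³` is its radius
of curvature `ρ`, as a function of the normal angle. The boundary point with outer normal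
`u(t) = (cos t, sin t)` is `x(t) = (α² cos t, β² sin t)/Φ(t)`, and `x' = ρ u'`, so
`t ↦ ⟨x(t), u(s)⟩` is a primitive of `ρ(t) sin(s - t)`. On a period starting at `s`, the sign of
`sin(s - t)` changes only at `s + π`, so the integral is `4 · (1/4) · ⟨x(s), u(s)⟩ = Φ(s)`, using
`⟨x(s + π), u(s)⟩ = -⟨x(s), u(s)⟩`.
-/

theorem integral_abs_sin_sub_mul_eq {ρ G : ℝ → ℝ} (s : ℝ) (hρ : Periodic ρ (2 * π))
    (hρc : Continuous ρ) (hG : ∀ t, HasDerivAt G (sin (s - t) * ρ t) t) :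
    ∫ t in (0)..(2 * π), |sin (s - t)| * ρ t = G s + G (s + 2 * π) - 2 * G (s + π) := by
  have hπ := pi_pos
  have hperiodic : Periodic (fun t => |sin (s - t)| * ρ t) (2 * π) := fun t => by
    simp only [← sub_sub, sin_sub_two_pi, hρ t]
  have hcont : Continuous fun t => |sin (s - t)| * ρ t := by fun_prop
  have hintegrable (a b : ℝ) : IntervalIntegrable (fun t => sin (s - t) * ρ t) volume a b :=
    (by fun_prop : Continuous fun t => sin (s - t) * ρ t).intervalIntegrable a b
  have hfirst : ∫ t in s..s + π, |sin (s - t)| * ρ t = G s - G (s + π) := by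
    rw [integral_congr (g := fun t => -(sin (s - t) * ρ t)), intervalIntegral.integral_neg,
      integral_eq_sub_of_hasDerivAt (fun t _ => hG t) (hintegrable _ _), neg_sub]
    intro t ht
    rw [Set.uIcc_of_le (by linarith)] at ht
    have : sin (s - t) ≤ 0 := by
      rw [← neg_sub, sin_neg, neg_nonpos]
      exact sin_nonneg_of_nonneg_of_le_pi (by linarith [ht.1]) (by linarith [ht.2])
    simp only [abs_of_nonpos this, neg_mul]
  have hsecond : ∫ t in s + π..s + 2 * π, |sin (s - t)| * ρ t = G (s + 2 * π) - G (s + π) := by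
    rw [integral_congr (g := fun t => sin (s - t) * ρ t),
      integral_eq_sub_of_hasDerivAt (fun t _ => hG t) (hintegrable _ _)]
    intro t ht
    rw [Set.uIcc_of_le (by linarith)] at ht
    have : 0 ≤ sin (s - t) := by
      rw [← sin_add_two_pi]
      exact sin_nonneg_of_nonneg_of_le_pi (by linarith [ht.2]) (by linarith [ht.1])
    simp only [abs_of_nonneg this]
  calc ∫ t in (0)..(2 * π), |sin (s - t)| * ρ t
      = ∫ t in s..s + 2 * π, |sin (s - t)| * ρ t := by
        simpa using hperiodic.intervalIntegral_add_eq 0 s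
    _ = (∫ t in s..s + π, |sin (s - t)| * ρ t) + ∫ t in s + π..s + 2 * π, |sin (s - t)| * ρ t :=
        (integral_add_adjacent_intervals (hcont.intervalIntegrable _ _)
          (hcont.intervalIntegrable _ _)).symm
    _ = G s + G (s + 2 * π) - 2 * G (s + π) := by rw [hfirst, hsecond]; ring

section Ellipse

variable {α β : ℝ}

noncomputable def ellipseSupport (α β t : ℝ) : ℝ := √(α ^ 2 * cos t ^ 2 + β ^ 2 * sin t ^ 2)

lemma sq_mul_cos_sq_add_sq_mul_sin_sq_pos (hα : α ≠ 0) (hβ : β ≠ 0) (t : ℝ) :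
    0 < α ^ 2 * cos t ^ 2 + β ^ 2 * sin t ^ 2 := by
  rcases eq_or_ne (cos t) 0 with hcos | hcos
  · have hsin : sin t ≠ 0 := fun hsin => by simpa [hsin, hcos] using sin_sq_add_cos_sq t
    rw [hcos]
    positivity
  · exact add_pos_of_pos_of_nonneg (by positivity) (by positivity)

lemma sq_ellipseSupport (t : ℝ) :
    ellipseSupport α β t ^ 2 = α ^ 2 * cos t ^ 2 + β ^ 2 * sin t ^ 2 :=
  sq_sqrt (by positivity)

lemma ellipseSupport_pos (hα : α ≠ 0) (hβ : β ≠ 0) (t : ℝ) : 0 < ellipseSupport α β t :=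
  sqrt_pos.mpr (sq_mul_cos_sq_add_sq_mul_sin_sq_pos hα hβ t)

lemma continuous_ellipseSupport : Continuous (ellipseSupport α β) := by
  unfold ellipseSupport
  fun_prop

lemma ellipseSupport_periodic : Periodic (ellipseSupport α β) π := fun t => by
  simp only [ellipseSupport, sin_add_pi, cos_add_pi, neg_sq]

lemma hasDerivAt_ellipseSupport (hα : α ≠ 0) (hβ : β ≠ 0) (t : ℝ) :
    HasDerivAt (ellipseSupport α β) ((β ^ 2 - α ^ 2) * sin t * cos t / ellipseSupport α β t) t := by
  have hquad : HasDerivAt (fun t => α ^ 2 * cos t ^ 2 + β ^ 2 * sin t ^ 2)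
      (2 * ((β ^ 2 - α ^ 2) * sin t * cos t)) t := by
    refine ((((hasDerivAt_cos t).pow 2).const_mul (α ^ 2)).add
      (((hasDerivAt_sin t).pow 2).const_mul (β ^ 2))).congr_deriv ?_
    ring
  refine (hquad.sqrt (sq_mul_cos_sq_add_sq_mul_sin_sq_pos hα hβ t).ne').congr_deriv ?_
  rw [mul_div_mul_left _ _ two_ne_zero]
  rfl

/-- `⟨x(t), u(s)⟩`, where `x(t)` is the boundary point of the ellipse with outer normal
`u(t) = (cos t, sin t)`. -/
noncomputable def ellipseBoundaryPairing (α β s t : ℝ) : ℝ :=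
  (α ^ 2 * cos s * cos t + β ^ 2 * sin s * sin t) / ellipseSupport α β t

lemma hasDerivAt_ellipseBoundaryPairing (hα : α ≠ 0) (hβ : β ≠ 0) (s t : ℝ) :
    HasDerivAt (ellipseBoundaryPairing α β s)
      (sin (s - t) * (α ^ 2 * β ^ 2 / ellipseSupport α β t ^ 3)) t := by
  have hΦ := (ellipseSupport_pos hα hβ t).ne'
  refine ((((hasDerivAt_cos t).const_mul (α ^ 2 * cos s)).add
    ((hasDerivAt_sin t).const_mul (β ^ 2 * sin s))).div
      (hasDerivAt_ellipseSupport hα hβ t) hΦ).congr_deriv ?_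
  rw [Pi.add_apply, sin_sub]
  field_simp
  linear_combination (α ^ 2 * β ^ 2 * (sin s * cos t - cos s * sin t)) * sin_sq_add_cos_sq t +
    (β ^ 2 * sin s * cos t - α ^ 2 * cos s * sin t) * sq_ellipseSupport (α := α) (β := β) t

lemma ellipseBoundaryPairing_antiperiodic (s : ℝ) :
    Antiperiodic (ellipseBoundaryPairing α β s) π := fun t => by
  simp only [ellipseBoundaryPairing, ellipseSupport_periodic t, sin_add_pi, cos_add_pi]
  ring

lemma ellipseBoundaryPairing_self (s : ℝ) :
    ellipseBoundaryPairing α β s s = ellipseSupport α β s := by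
  conv_rhs => rw [← mul_self_div_self (ellipseSupport α β s), ← sq, sq_ellipseSupport]
  rw [ellipseBoundaryPairing]
  ring

end Ellipse

/-- `α²β² K * Φ⁻³ = Φ` for the elliptical orbit length `Φ`, where
`K(s) = |sin s|/4`. -/
theorem kernel_convolution_ellipse
    (α β : ℝ) (hβ : 0 < β) (hαβ : β < α) (Φ : ℝ → ℝ)
    (hΦ : Φ = fun s => Real.sqrt (α ^ 2 * cos s ^ 2 + β ^ 2 * sin s ^ 2)) :
    ∀ s : ℝ,
      (∫ t in (0:ℝ)..(2 * π), (1/4) * |sin (s - t)| * (α ^ 2 * β ^ 2 / (Φ t) ^ 3)) =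
        Φ s := by
  obtain rfl : Φ = ellipseSupport α β := hΦ
  intro s
  have hα : α ≠ 0 := (hβ.trans hαβ).ne'
  have hρ : Periodic (fun t => α ^ 2 * β ^ 2 / ellipseSupport α β t ^ 3) (2 * π) :=
    (ellipseSupport_periodic.comp fun x => α ^ 2 * β ^ 2 / x ^ 3).nat_mul 2
  have hρc : Continuous fun t => α ^ 2 * β ^ 2 / ellipseSupport α β t ^ 3 :=
    continuous_const.div (continuous_ellipseSupport.pow 3)
      fun t => pow_ne_zero 3 (ellipseSupport_pos hα hβ.ne' t).ne'
  simp_rw [mul_assoc, intervalIntegral.integral_const_mul]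
  rw [integral_abs_sin_sub_mul_eq s hρ hρc (hasDerivAt_ellipseBoundaryPairing hα hβ.ne' s),
    (ellipseBoundaryPairing_antiperiodic s).periodic_two_mul, ellipseBoundaryPairing_antiperiodic,
    ellipseBoundaryPairing_self]
  ring
end

section
/- For every w ∈ H¹([-π/2, π/2]) with w(-π/2) = w(π/2) = 0, (1/4)∫_{-π/2}^{π/2} sec²(s) w(s)² ds ≤ ∫_{-π/2}^{π/2} w'(s)² ds - (1/4)∫_{-π/2}^{π/2} w(s)² ds. -/
/-!
With `φ = √cos`, the ground state of `-d²/ds² - (1/4) sec² s` (eigenvalue `1/4`), one has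
`w' + (1/2) tan s · w = φ (w / φ)'`, and the pointwise identity
`w'² - (1/4) sec² s · w² - (1/4) w² = (w' + (1/2) tan s · w)² - ((1/2) tan s · w²)'`
integrates on `[-b, b]`, `b < π/2`, to the inequality up to the boundary term
`(1/2) tan b (w(b)² + w(-b)²)`. As `w(±π/2) = 0`, Cauchy–Schwarz on the tails gives
`w(±b)² ≤ (π/2 - b) ∫_tail w'²`, and `(π/2 - b) tan b ≤ 1`, so the boundary term is absorbed by
the tails of `∫ w'²`. Monotone convergence as `b ↑ π/2` finishes the proof.
-/

open Real MeasureTheory intervalIntegral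
open Set Filter Topology

lemma IntervalIntegrable.of_sq {f : ℝ → ℝ} {a b : ℝ}
    (hf : AEStronglyMeasurable f (volume.restrict (uIoc a b)))
    (hf2 : IntervalIntegrable (fun x => f x ^ 2) volume a b) :
    IntervalIntegrable f volume a b := by
  have : IsFiniteMeasure (volume.restrict (uIoc a b)) :=
    isFiniteMeasure_restrict.2 measure_Ioc_lt_top.ne
  rw [intervalIntegrable_iff] at hf2 ⊢
  exact ((memLp_two_iff_integrable_sq hf).2 hf2).integrable one_le_two

lemma sq_integral_le_mul_integral_sq {f : ℝ → ℝ} {a b : ℝ} (hab : a ≤ b)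
    (hf : IntervalIntegrable f volume a b)
    (hf2 : IntervalIntegrable (fun x => f x ^ 2) volume a b) :
    (∫ x in a..b, f x) ^ 2 ≤ (b - a) * ∫ x in a..b, f x ^ 2 := by
  set I := ∫ x in a..b, f x
  set J := ∫ x in a..b, f x ^ 2
  set L := b - a
  have hexpand : ∫ x in a..b, (L * f x - I) ^ 2 = L * (L * J - I ^ 2) := by
    have : ∀ x, (L * f x - I) ^ 2 = L ^ 2 * f x ^ 2 - (2 * L * I) * f x + I ^ 2 := fun x => by ring
    simp only [this]
    rw [integral_add ((hf2.const_mul _).sub (hf.const_mul _)) intervalIntegrable_const,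
      integral_sub (hf2.const_mul _) (hf.const_mul _), intervalIntegral.integral_const_mul,
      intervalIntegral.integral_const_mul, intervalIntegral.integral_const, smul_eq_mul]
    ring
  have hnonneg : 0 ≤ L * (L * J - I ^ 2) := hexpand ▸ integral_nonneg hab fun x _ => sq_nonneg _
  rcases hab.eq_or_lt with rfl | hlt
  · simp [I, L]
  · nlinarith [sub_pos.2 hlt]

lemma aestronglyMeasurable_of_hasDerivAt {w w' : ℝ → ℝ} {μ : Measure ℝ} {s : Set ℝ}
    (hs : MeasurableSet s) (hderiv : ∀ x ∈ s, HasDerivAt w (w' x) x) :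
    AEStronglyMeasurable w' (μ.restrict s) :=
  (measurable_deriv w).aestronglyMeasurable.congr <|
    (ae_restrict_iff' hs).2 (ae_of_all _ fun x hx => (hderiv x hx).deriv)

lemma tendsto_setLIntegral_of_monotone {α ι : Type*} [MeasurableSpace α] [Preorder ι]
    [(atTop : Filter ι).IsCountablyGenerated] {μ : Measure α} [SFinite μ] {f : α → ENNReal}
    {s : ι → Set α} (h_mono : Monotone s) :
    Tendsto (fun i => ∫⁻ x in s i, f x ∂μ) atTop (𝓝 (∫⁻ x in ⋃ i, s i, f x ∂μ)) := by
  simp only [← withDensity_apply' f]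
  exact tendsto_measure_iUnion_atTop h_mono

lemma pi_div_two_sub_mul_tan_le_one {x : ℝ} (hx0 : 0 < x) (hx : x < π / 2) :
    (π / 2 - x) * tan x ≤ 1 := by
  have htan : 0 < tan x := tan_pos_of_pos_of_lt_pi_div_two hx0 hx
  have h : π / 2 - x < (tan x)⁻¹ := tan_pi_div_two_sub x ▸ lt_tan (by linarith) (by linarith)
  calc (π / 2 - x) * tan x ≤ (tan x)⁻¹ * tan x := (mul_lt_mul_of_pos_right h htan).le
    _ = 1 := inv_mul_cancel₀ htan.ne'

lemma iUnion_Ioo_neg_arctan : ⋃ t, Ioo (-arctan t) (arctan t) = Ioo (-(π / 2)) (π / 2) := by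
  ext x
  simp only [mem_iUnion, mem_Ioo]
  constructor
  · rintro ⟨t, h1, h2⟩
    exact ⟨by linarith [arctan_lt_pi_div_two t], h2.trans (arctan_lt_pi_div_two t)⟩
  · rintro ⟨h1, h2⟩
    refine ⟨tan |x| + 1, ?_⟩
    have : |x| < arctan (tan |x| + 1) := by
      calc |x| = arctan (tan |x|) :=
            (arctan_tan (by linarith [abs_nonneg x]) (abs_lt.2 ⟨h1, h2⟩)).symm
        _ < arctan (tan |x| + 1) := arctan_strictMono (lt_add_one _)
    exact abs_lt.1 this

lemma monotone_Ioo_neg_arctan : Monotone fun t => Ioo (-arctan t) (arctan t) :=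
  fun _ _ h =>
    Ioo_subset_Ioo (neg_le_neg (arctan_strictMono.monotone h)) (arctan_strictMono.monotone h)

section HasDerivAtIcc

variable {w w' : ℝ → ℝ} {a b : ℝ}

lemma IntervalIntegrable.of_hasDerivAt_of_sq (hab : a ≤ b)
    (hderiv : ∀ s ∈ Icc a b, HasDerivAt w (w' s) s)
    (hw' : IntervalIntegrable (fun s => w' s ^ 2) volume a b) :
    IntervalIntegrable w' volume a b :=
  .of_sq (aestronglyMeasurable_of_hasDerivAt measurableSet_uIoc fun x hx =>
    hderiv x (Ioc_subset_Icc_self (uIoc_of_le hab ▸ hx))) hw'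

lemma sq_sub_le_mul_integral_sq_of_hasDerivAt (hab : a ≤ b)
    (hderiv : ∀ s ∈ Icc a b, HasDerivAt w (w' s) s)
    (hw' : IntervalIntegrable (fun s => w' s ^ 2) volume a b) :
    (w b - w a) ^ 2 ≤ (b - a) * ∫ s in a..b, w' s ^ 2 := by
  have hint := IntervalIntegrable.of_hasDerivAt_of_sq hab hderiv hw'
  rw [← integral_eq_sub_of_hasDerivAt (fun x hx => hderiv x (uIcc_of_le hab ▸ hx)) hint]
  exact sq_integral_le_mul_integral_sq hab hint hw'

lemma quarter_integral_sq_div_cos_sq_le_of_hasDerivAt (hab : a ≤ b) (ha : -(π / 2) < a)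
    (hb : b < π / 2)
    (hderiv : ∀ s ∈ Icc a b, HasDerivAt w (w' s) s)
    (hw' : IntervalIntegrable (fun s => w' s ^ 2) volume a b) :
    (1 / 4) * (∫ s in a..b, w s ^ 2 / cos s ^ 2) + (1 / 4) * (∫ s in a..b, w s ^ 2)
      - ∫ s in a..b, w' s ^ 2 ≤ (tan b * w b ^ 2 - tan a * w a ^ 2) / 2 := by
  have hcos : ∀ s ∈ uIcc a b, cos s ≠ 0 := fun s hs => by
    rw [uIcc_of_le hab] at hs
    exact (cos_pos_of_mem_Ioo ⟨ha.trans_le hs.1, hs.2.trans_lt hb⟩).ne'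
  have hderiv' : ∀ s ∈ uIcc a b, HasDerivAt w (w' s) s := uIcc_of_le hab ▸ hderiv
  have hw : ContinuousOn w (uIcc a b) := HasDerivAt.continuousOn hderiv'
  have htan : ContinuousOn tan (uIcc a b) := fun s hs =>
    (continuousAt_tan.2 (hcos s hs)).continuousWithinAt
  have hw2 : IntervalIntegrable (fun s => w s ^ 2) volume a b := (hw.pow 2).intervalIntegrable
  have hsec : IntervalIntegrable (fun s => w s ^ 2 / cos s ^ 2) volume a b :=
    ((hw.pow 2).div (continuousOn_cos.pow 2) fun s hs =>
      pow_ne_zero 2 (hcos s hs)).intervalIntegrable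
  set F' : ℝ → ℝ := fun s => w s ^ 2 / cos s ^ 2 / 2 + tan s * w s * w' s
  have hF : ∀ s ∈ uIcc a b, HasDerivAt (fun s => tan s * w s ^ 2 / 2) (F' s) s := fun s hs => by
    refine (((hasDerivAt_tan (hcos s hs)).fun_mul
      ((hderiv' s hs).fun_pow 2)).div_const 2).congr_deriv ?_
    simp only [F']
    field_simp
    ring
  have hF' : IntervalIntegrable F' volume a b :=
    (hsec.div_const 2).add
      ((IntervalIntegrable.of_hasDerivAt_of_sq hab hderiv hw').continuousOn_mul (htan.mul hw))
  have hpoint : ∀ s ∈ Icc a b, w s ^ 2 / cos s ^ 2 / 4 + w s ^ 2 / 4 - w' s ^ 2 ≤ F' s := by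
    intro s hs
    have : 1 / cos s ^ 2 = 1 + tan s ^ 2 := by
      rw [one_div, ← inv_one_add_tan_sq (hcos s (uIcc_of_le hab ▸ hs)), inv_inv]
    simp only [F', div_eq_mul_one_div (w s ^ 2), this]
    nlinarith [sq_nonneg (w' s + tan s * w s / 2)]
  have hsum := (hsec.div_const 4).add (hw2.div_const 4)
  have hmono := integral_mono_on hab (hsum.sub hw') hF' hpoint
  rw [integral_eq_sub_of_hasDerivAt hF hF', integral_sub hsum hw',
    integral_add (hsec.div_const 4) (hw2.div_const 4), intervalIntegral.integral_div,
    intervalIntegral.integral_div] at hmono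
  linarith

end HasDerivAtIcc

section VanishingEnds

variable {w w' : ℝ → ℝ}

lemma quarter_integral_sq_div_cos_sq_le_of_vanishing_ends
    (hderiv : ∀ s ∈ Icc (-(π / 2)) (π / 2), HasDerivAt w (w' s) s)
    (hL2 : IntervalIntegrable (fun s => w' s ^ 2) volume (-(π / 2)) (π / 2))
    (hbc1 : w (-(π / 2)) = 0) (hbc2 : w (π / 2) = 0) {b : ℝ} (hb0 : 0 < b) (hb : b < π / 2) :
    (1 / 4) * ∫ s in (-b)..b, w s ^ 2 / cos s ^ 2 ≤
      (∫ s in (-(π / 2))..(π / 2), w' s ^ 2) - (1 / 4) * ∫ s in (-b)..b, w s ^ 2 := by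
  have hderiv_on {c d : ℝ} (hc : -(π / 2) ≤ c) (hd : d ≤ π / 2) :
      ∀ s ∈ Icc c d, HasDerivAt w (w' s) s := fun s hs => hderiv s ⟨hc.trans hs.1, hs.2.trans hd⟩
  have hL2_on {c d : ℝ} (hc : -(π / 2) ≤ c) (hcd : c ≤ d) (hd : d ≤ π / 2) :
      IntervalIntegrable (fun s => w' s ^ 2) volume c d :=
    hL2.mono_set <| by
      rw [uIcc_of_le hcd, uIcc_of_le (by linarith)]
      exact Icc_subset_Icc hc hd
  set S := ∫ s in (-(π / 2))..(-b), w' s ^ 2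
  set T := ∫ s in b..(π / 2), w' s ^ 2
  have hS : 0 ≤ S := integral_nonneg (by linarith) fun _ _ => sq_nonneg _
  have hT : 0 ≤ T := integral_nonneg hb.le fun _ _ => sq_nonneg _
  have hsplit : S + (∫ s in (-b)..b, w' s ^ 2) + T = ∫ s in (-(π / 2))..(π / 2), w' s ^ 2 := by
    rw [integral_add_adjacent_intervals (hL2_on le_rfl (by linarith) (by linarith))
        (hL2_on (by linarith) (by linarith) (by linarith)),
      integral_add_adjacent_intervals (hL2_on le_rfl (by linarith) (by linarith))
        (hL2_on (by linarith) hb.le le_rfl)]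
  have hleft := sq_sub_le_mul_integral_sq_of_hasDerivAt (a := -(π / 2)) (b := -b)
    (by linarith) (hderiv_on le_rfl (by linarith)) (hL2_on le_rfl (by linarith) (by linarith))
  rw [hbc1, sub_zero, show -b - -(π / 2) = π / 2 - b by ring] at hleft
  have hright := sq_sub_le_mul_integral_sq_of_hasDerivAt (b := π / 2) hb.le
    (hderiv_on (by linarith) le_rfl) (hL2_on (by linarith) hb.le le_rfl)
  rw [hbc2, zero_sub, neg_sq] at hright
  have htan := pi_div_two_sub_mul_tan_le_one hb0 hb
  have htan0 := (tan_pos_of_pos_of_lt_pi_div_two hb0 hb).le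
  have key := quarter_integral_sq_div_cos_sq_le_of_hasDerivAt (neg_le_self hb0.le)
    (neg_lt_neg hb) hb (hderiv_on (by linarith) hb.le) (hL2_on (by linarith) (by linarith) hb.le)
  rw [tan_neg] at key
  nlinarith [mul_le_mul_of_nonneg_left hleft htan0, mul_le_mul_of_nonneg_left hright htan0,
    mul_le_mul_of_nonneg_right htan hS, mul_le_mul_of_nonneg_right htan hT]

lemma quarter_lintegral_sq_div_cos_sq_le_of_vanishing_ends
    (hderiv : ∀ s ∈ Icc (-(π / 2)) (π / 2), HasDerivAt w (w' s) s)
    (hL2 : IntervalIntegrable (fun s => w' s ^ 2) volume (-(π / 2)) (π / 2))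
    (hbc1 : w (-(π / 2)) = 0) (hbc2 : w (π / 2) = 0) {b : ℝ} (hb0 : 0 < b) (hb : b < π / 2) :
    (1 / 4 : ENNReal) * ∫⁻ s in Ioo (-b) b, ENNReal.ofReal (w s ^ 2 / cos s ^ 2) ≤
      ENNReal.ofReal ((∫ s in (-(π / 2))..(π / 2), w' s ^ 2)
        - (1 / 4) * ∫ s in Ioo (-b) b, w s ^ 2) := by
  have hw : ContinuousOn w (Icc (-b) b) :=
    (HasDerivAt.continuousOn hderiv).mono (Icc_subset_Icc (by linarith) hb.le)
  have hcos : ∀ s ∈ Icc (-b) b, cos s ^ 2 ≠ 0 := fun s hs =>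
    pow_ne_zero 2 (cos_pos_of_mem_Ioo ⟨by linarith [hs.1], by linarith [hs.2]⟩).ne'
  have hint : IntegrableOn (fun s => w s ^ 2 / cos s ^ 2) (Ioo (-b) b) :=
    ((hw.pow 2).div (continuousOn_cos.pow 2) hcos).integrableOn_Icc.mono_set Ioo_subset_Icc_self
  rw [← ofReal_integral_eq_lintegral_ofReal hint (ae_of_all _ fun _ => by positivity),
    ← integral_Ioc_eq_integral_Ioo, ← integral_Ioc_eq_integral_Ioo,
    ← intervalIntegral.integral_of_le (neg_le_self hb0.le),
    ← intervalIntegral.integral_of_le (neg_le_self hb0.le),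
    show (1 / 4 : ENNReal) = ENNReal.ofReal (1 / 4) by
      rw [ENNReal.ofReal_div_of_pos four_pos]; simp, ← ENNReal.ofReal_mul (by norm_num)]
  exact ENNReal.ofReal_le_ofReal
    (quarter_integral_sq_div_cos_sq_le_of_vanishing_ends hderiv hL2 hbc1 hbc2 hb0 hb)

end VanishingEnds

/-- Sharp borderline (`g = -1/4`) Hardy-type inequality: for `w ∈ H¹([-π/2,π/2])`
vanishing at the endpoints,
`(1/4)∫ sec²(s) w² ≤ ∫ w'² - (1/4)∫ w²`. -/
theorem borderline_sec_squared_inequality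
    (w w' : ℝ → ℝ)
    (hderiv : ∀ s ∈ Set.Icc (-(π/2)) (π/2), HasDerivAt w (w' s) s)
    (hL2 : IntervalIntegrable (fun s => (w' s) ^ 2) volume (-(π/2)) (π/2))
    (hbc1 : w (-(π/2)) = 0) (hbc2 : w (π/2) = 0) :
    (1/4 : ENNReal) * ∫⁻ s in Set.Ioo (-(π/2)) (π/2),
        ENNReal.ofReal ((w s) ^ 2 / cos s ^ 2) ≤
      ENNReal.ofReal ((∫ s in (-(π/2))..(π/2), (w' s) ^ 2)
        - (1/4) * ∫ s in (-(π/2))..(π/2), (w s) ^ 2) := by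
  have hw2 : IntegrableOn (fun s => w s ^ 2) (⋃ t, Ioo (-arctan t) (arctan t)) := by
    rw [iUnion_Ioo_neg_arctan]
    exact ((HasDerivAt.continuousOn hderiv).pow 2).integrableOn_Icc.mono_set Ioo_subset_Icc_self
  have hlhs := ENNReal.Tendsto.const_mul (a := 1 / 4)
    (tendsto_setLIntegral_of_monotone (μ := volume)
      (f := fun s => ENNReal.ofReal (w s ^ 2 / cos s ^ 2)) monotone_Ioo_neg_arctan) (by simp)
  have hrhs := (ENNReal.continuous_ofReal.tendsto _).comp
    (((tendsto_setIntegral_of_monotone (fun _ => measurableSet_Ioo) monotone_Ioo_neg_arctan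
      hw2).const_mul (1 / 4)).const_sub (∫ s in (-(π / 2))..(π / 2), w' s ^ 2))
  rw [iUnion_Ioo_neg_arctan] at hlhs hrhs
  rw [← integral_Ioc_eq_integral_Ioo, ← intervalIntegral.integral_of_le (by linarith [pi_pos])]
    at hrhs
  exact le_of_tendsto_of_tendsto hlhs hrhs <| (eventually_gt_atTop 0).mono fun t ht =>
    quarter_lintegral_sq_div_cos_sq_le_of_vanishing_ends hderiv hL2 hbc1 hbc2 (arctan_pos.2 ht)
      (arctan_lt_pi_div_two t)
end
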